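/- (Lemma 3.1: cube tilings give extremal metrics) With the setup of the previous statement, assume additionally that vol(s) = Σ_v s(v)³ = 1 (the volume of R) and that l_s(B₁,B̄₁) = h. Then for every metric m with positive volume, l_m(B₁,B̄₁)³ / vol(m) ≤ l_s(B₁,B̄₁)³ / vol(s) = h³; i.e., s is an extremal metric for (G, B₁, B̄₁). -/

import Mathlib

/-! Project each cube `C_v` to its shadow, a square in the base `Q` of `R`. Above every point of
`Q` the cubes met by the vertical line contain a walk from `B₁` to `B₂`, so the function
`∑ v, m v · 1_{shadow v}` is at least `l_m` on `Q`; integrating over `Q` gives `h⁻¹ l_m ≤ ∑ m(v) s(v)²`. Hölder's inequality with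
exponents `3` and `3/2` bounds the right side by `vol(m)^{1/3} vol(s)^{2/3} = vol(m)^{1/3}`, so
`l_m³ ≤ h³ vol(m)`. -/

noncomputable def gdist {V : Type*} (G : SimpleGraph V) (m : V → ℝ) (A B : Set V) : ℝ :=
  sInf {x : ℝ | ∃ u ∈ A, ∃ v ∈ B, ∃ w : G.Walk u v, x = (w.support.map m).sum}

noncomputable def gvol {V : Type*} [Fintype V] (m : V → ℝ) : ℝ := ∑ v, m v ^ 3

open MeasureTheory Set

section GraphDistance

variable {V : Type*} (G : SimpleGraph V) {m : V → ℝ}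

lemma gdist_nonneg (hm : ∀ v, 0 ≤ m v) (A B : Set V) : 0 ≤ gdist G m A B := by
  apply Real.sInf_nonneg
  rintro x ⟨u, -, v, -, w, rfl⟩
  exact List.sum_nonneg (by simpa using fun x _ => hm x)

lemma gdist_le_sum_support (hm : ∀ v, 0 ≤ m v) {A B : Set V} {u w : V} (hu : u ∈ A) (hw : w ∈ B)
    (p : G.Walk u w) : gdist G m A B ≤ (p.support.map m).sum :=
  csInf_le ⟨0, fun _ hx => by
    obtain ⟨_, -, _, -, q, rfl⟩ := hx
    exact List.sum_nonneg (by simpa using fun x _ => hm x)⟩ ⟨u, hu, w, hw, p, rfl⟩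

/-- Passing to the underlying path lets each vertex of a walk be counted only once. -/
lemma gdist_le_sum_of_support_subset (hm : ∀ v, 0 ≤ m v) {A B : Set V} {u w : V} (hu : u ∈ A)
    (hw : w ∈ B) (p : G.Walk u w) {T : Finset V} (hT : ∀ x ∈ p.support, x ∈ T) :
    gdist G m A B ≤ ∑ x ∈ T, m x := by
  classical
  let q : G.Walk u w := p.toPath
  calc gdist G m A B ≤ (q.support.map m).sum := gdist_le_sum_support G hm hu hw q
    _ = ∑ x ∈ q.support.toFinset, m x := (List.sum_toFinset m p.toPath.2.support_nodup).symm
    _ ≤ ∑ x ∈ T, m x := Finset.sum_le_sum_of_subset_of_nonneg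
        (fun x hx => hT x (p.support_toPath_subset_support (List.mem_toFinset.1 hx)))
        (fun x _ _ => hm x)

end GraphDistance

lemma measureReal_mul_le_sum_mul_measureReal {X ι : Type*} [MeasurableSpace X] [Fintype ι]
    (μ : Measure X) {S : Set X} (hS : MeasurableSet S) (hSfin : μ S ≠ ⊤) {R : ι → Set X}
    (hR : ∀ i, MeasurableSet (R i)) (hRfin : ∀ i, μ (R i) ≠ ⊤) {m : ι → ℝ} (hm : ∀ i, 0 ≤ m i)
    {c : ℝ} (hc : ∀ t ∈ S, ∃ T : Finset ι, (∀ i ∈ T, t ∈ R i) ∧ c ≤ ∑ i ∈ T, m i) :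
    μ.real S * c ≤ ∑ i, m i * μ.real (R i) := by
  set f : X → ℝ := fun t => ∑ i, (R i).indicator (fun _ => m i) t
  have hint_i : ∀ i, Integrable ((R i).indicator fun _ => m i) μ := fun i =>
    (integrable_indicator_iff (hR i)).2 (integrableOn_const (hRfin i))
  have hf : Integrable f μ := integrable_finsetSum _ fun i _ => hint_i i
  have hf_nonneg : ∀ t, 0 ≤ f t := fun t =>
    Finset.sum_nonneg fun i _ => indicator_nonneg (fun _ _ => hm i) t
  have hc_le_f : ∀ t ∈ S, c ≤ f t := by
    intro t ht
    obtain ⟨T, hTR, hcT⟩ := hc t ht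
    calc c ≤ ∑ i ∈ T, m i := hcT
      _ = ∑ i ∈ T, (R i).indicator (fun _ => m i) t :=
          Finset.sum_congr rfl fun i hi => (indicator_of_mem (hTR i hi) fun _ => m i).symm
      _ ≤ f t := Finset.sum_le_sum_of_subset_of_nonneg (Finset.subset_univ T)
          fun i _ _ => indicator_nonneg (fun _ _ => hm i) t
  calc μ.real S * c = ∫ _ in S, c ∂μ := by rw [setIntegral_const, smul_eq_mul]
    _ ≤ ∫ t in S, f t ∂μ :=
        setIntegral_mono_on (integrableOn_const hSfin) hf.integrableOn hS hc_le_f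
    _ ≤ ∫ t, f t ∂μ := setIntegral_le_integral hf (Filter.Eventually.of_forall hf_nonneg)
    _ = ∑ i, m i * μ.real (R i) := by
        rw [integral_finsetSum _ fun i _ => hint_i i]
        refine Finset.sum_congr rfl fun i _ => ?_
        rw [integral_indicator_const _ (hR i), smul_eq_mul, mul_comm]

lemma volume_real_Icc_prod {x y : ℝ × ℝ} (hxy : x ≤ y) :
    volume.real (Icc x y) = (y.1 - x.1) * (y.2 - x.2) := by
  rw [measureReal_def, ← Icc_prod_Icc, Measure.volume_eq_prod, Measure.prod_prod,
    Real.volume_Icc, Real.volume_Icc, ← ENNReal.ofReal_mul (sub_nonneg.2 hxy.1),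
    ENNReal.toReal_ofReal (mul_nonneg (sub_nonneg.2 hxy.1) (sub_nonneg.2 hxy.2))]

/-- Hölder's inequality with exponents `3` and `3/2`, cubed. -/
lemma sum_mul_sq_pow_three_le {ι : Type*} (T : Finset ι) {f g : ι → ℝ} (hf : ∀ i ∈ T, 0 ≤ f i)
    (hg : ∀ i ∈ T, 0 ≤ g i) :
    (∑ i ∈ T, f i * g i ^ 2) ^ 3 ≤ (∑ i ∈ T, f i ^ 3) * (∑ i ∈ T, g i ^ 3) ^ 2 := by
  have hpq : (3 : ℝ).HolderConjugate (3 / 2) := by rw [Real.holderConjugate_iff]; norm_num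
  have holder := Real.inner_le_Lp_mul_Lq_of_nonneg T hpq hf fun i hi => sq_nonneg (g i)
  have hf3 : ∀ i ∈ T, f i ^ (3 : ℝ) = f i ^ 3 := fun i _ => by norm_cast
  have hg3 : ∀ i ∈ T, (g i ^ 2) ^ (3 / 2 : ℝ) = g i ^ 3 := fun i hi => by
    rw [← Real.rpow_natCast, ← Real.rpow_mul (hg i hi)]; norm_num
  rw [Finset.sum_congr rfl hf3, Finset.sum_congr rfl hg3] at holder
  have hF : 0 ≤ ∑ i ∈ T, f i ^ 3 := Finset.sum_nonneg fun i hi => pow_nonneg (hf i hi) 3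
  have hG : 0 ≤ ∑ i ∈ T, g i ^ 3 := Finset.sum_nonneg fun i hi => pow_nonneg (hg i hi) 3
  calc (∑ i ∈ T, f i * g i ^ 2) ^ 3
      ≤ ((∑ i ∈ T, f i ^ 3) ^ (1 / 3 : ℝ) * (∑ i ∈ T, g i ^ 3) ^ (1 / (3 / 2) : ℝ)) ^ 3 :=
        pow_le_pow_left₀ (Finset.sum_nonneg fun i hi =>
          mul_nonneg (hf i hi) (sq_nonneg _)) holder 3
    _ = (∑ i ∈ T, f i ^ 3) * (∑ i ∈ T, g i ^ 3) ^ 2 := by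
        rw [mul_pow, ← Real.rpow_natCast, ← Real.rpow_natCast, ← Real.rpow_mul hF,
          ← Real.rpow_mul hG, ← Real.rpow_natCast (∑ i ∈ T, g i ^ 3)]
        norm_num

lemma inv_mul_gdist_le_sum_mul_sq {V : Type*} [Fintype V] (G : SimpleGraph V) (B₁ B₂ : Set V)
    {h : ℝ} (hh : 0 < h) (a : V → (Fin 3 → ℝ)) {s : V → ℝ} (hs : ∀ v, 0 ≤ s v)
    (hline : ∀ t₁ ∈ Set.Icc (0 : ℝ) (Real.sqrt h⁻¹), ∀ t₂ ∈ Set.Icc (0 : ℝ) (Real.sqrt h⁻¹),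
      ∃ u ∈ B₁, ∃ w ∈ B₂, ∃ p : G.Walk u w, ∀ x ∈ p.support,
        ∃ q : Fin 3 → ℝ, q 0 = t₁ ∧ q 1 = t₂ ∧ q ∈ Set.Icc (a x) (a x + fun _ => s x))
    {m : V → ℝ} (hm : ∀ v, 0 ≤ m v) :
    h⁻¹ * gdist G m B₁ B₂ ≤ ∑ v, m v * s v ^ 2 := by
  classical
  set r := Real.sqrt h⁻¹
  let shadow : V → Set (ℝ × ℝ) := fun v => Icc (a v 0, a v 1) (a v 0 + s v, a v 1 + s v)
  have hr : 0 ≤ r := Real.sqrt_nonneg _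
  set Q : Set (ℝ × ℝ) := Icc (0, 0) (r, r)
  have hvol_base : volume.real Q = h⁻¹ := by
    rw [volume_real_Icc_prod ⟨hr, hr⟩, sub_zero, Real.mul_self_sqrt (inv_nonneg.2 hh.le)]
  have hvol_shadow : ∀ v, volume.real (shadow v) = s v ^ 2 := fun v => by
    rw [volume_real_Icc_prod ⟨by simp [hs v], by simp [hs v]⟩]; ring
  have hcover : ∀ t ∈ Q, ∃ T : Finset V,
      (∀ v ∈ T, t ∈ shadow v) ∧ gdist G m B₁ B₂ ≤ ∑ v ∈ T, m v := by
    rintro t ⟨⟨h01, h02⟩, ⟨h11, h12⟩⟩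
    obtain ⟨u, hu, w, hw, p, hp⟩ := hline t.1 ⟨h01, h11⟩ t.2 ⟨h02, h12⟩
    refine ⟨p.support.toFinset, fun v hv => ?_,
      gdist_le_sum_of_support_subset G hm hu hw p fun x hx => List.mem_toFinset.2 hx⟩
    obtain ⟨q, hq0, hq1, hqa, hqb⟩ := hp v (List.mem_toFinset.1 hv)
    exact ⟨⟨hq0 ▸ hqa 0, hq1 ▸ hqa 1⟩, ⟨hq0 ▸ hqb 0, hq1 ▸ hqb 1⟩⟩
  calc h⁻¹ * gdist G m B₁ B₂ = volume.real Q * gdist G m B₁ B₂ := by rw [hvol_base]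
    _ ≤ ∑ v, m v * volume.real (shadow v) :=
        measureReal_mul_le_sum_mul_measureReal volume measurableSet_Icc
          isCompact_Icc.measure_lt_top.ne (fun v => measurableSet_Icc)
          (fun v => isCompact_Icc.measure_lt_top.ne) hm hcover
    _ = ∑ v, m v * s v ^ 2 := Finset.sum_congr rfl fun v _ => by rw [hvol_shadow]

theorem stmt11_general {V : Type*} [Fintype V] (G : SimpleGraph V)
    (B₁ B₂ : Set V)
    (h : ℝ) (hh : 0 < h) (a : V → (Fin 3 → ℝ)) (s : V → ℝ) (hs : ∀ v, 0 ≤ s v)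
    (hline : ∀ t₁ ∈ Set.Icc (0 : ℝ) (Real.sqrt h⁻¹), ∀ t₂ ∈ Set.Icc (0 : ℝ) (Real.sqrt h⁻¹),
      ∃ u ∈ B₁, ∃ w ∈ B₂, ∃ p : G.Walk u w, ∀ x ∈ p.support,
        ∃ q : Fin 3 → ℝ, q 0 = t₁ ∧ q 1 = t₂ ∧ q ∈ Set.Icc (a x) (a x + fun _ => s x))
    (hvols : gvol s = 1) (hls : gdist G s B₁ B₂ = h) :
    (gdist G s B₁ B₂) ^ 3 / gvol s = h ^ 3 ∧
      ∀ m : V → ℝ, (∀ v, 0 ≤ m v) → 0 < gvol m →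
        (gdist G m B₁ B₂) ^ 3 / gvol m ≤ (gdist G s B₁ B₂) ^ 3 / gvol s := by
  refine ⟨by rw [hls, hvols, div_one], fun m hm hvm => ?_⟩
  rw [hls, hvols, div_one, div_le_iff₀ hvm]
  have havg := inv_mul_gdist_le_sum_mul_sq G B₁ B₂ hh a hs hline hm
  have hholder := sum_mul_sq_pow_three_le Finset.univ (fun v _ => hm v) (fun v _ => hs v)
  rw [← gvol, ← gvol, hvols, one_pow, mul_one] at hholder
  have hcube : (h⁻¹ * gdist G m B₁ B₂) ^ 3 ≤ gvol m :=
    (pow_le_pow_left₀ (by positivity [gdist_nonneg G hm B₁ B₂]) havg 3).trans hholder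
  rw [mul_pow, inv_pow, inv_mul_le_iff₀ (by positivity)] at hcube
  linarith

/-- Lemma 3.1: cube tilings give extremal metrics. If the edge-length function `s`
of a cube tiling of `R = [0,√h⁻¹]² × [0,h]` has unit volume and `l_s(B₁,B̄₁) = h`,
then `s` is extremal for `(G,B₁,B̄₁)`. -/
theorem stmt11 {V : Type*} [Fintype V] (G : SimpleGraph V)
    (B₁ B₂ : Set V) (h₁ : B₁.Nonempty) (h₂ : B₂.Nonempty)
    (h : ℝ) (hh : 0 < h) (a : V → (Fin 3 → ℝ)) (s : V → ℝ) (hs : ∀ v, 0 ≤ s v)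
    (huni : (⋃ v, Set.Icc (a v) (a v + fun _ => s v))
      = Set.Icc (0 : Fin 3 → ℝ) ![Real.sqrt h⁻¹, Real.sqrt h⁻¹, h])
    (hdisj : ∀ u v : V, u ≠ v →
      Disjoint (interior (Set.Icc (a u) (a u + fun _ => s u)))
        (interior (Set.Icc (a v) (a v + fun _ => s v))))
    (hline : ∀ t₁ ∈ Set.Icc (0 : ℝ) (Real.sqrt h⁻¹), ∀ t₂ ∈ Set.Icc (0 : ℝ) (Real.sqrt h⁻¹),
      ∃ u ∈ B₁, ∃ w ∈ B₂, ∃ p : G.Walk u w, ∀ x ∈ p.support,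
        ∃ q : Fin 3 → ℝ, q 0 = t₁ ∧ q 1 = t₂ ∧ q ∈ Set.Icc (a x) (a x + fun _ => s x))
    (hvols : gvol s = 1) (hls : gdist G s B₁ B₂ = h) :
    (gdist G s B₁ B₂) ^ 3 / gvol s = h ^ 3 ∧
      ∀ m : V → ℝ, (∀ v, 0 ≤ m v) → 0 < gvol m →
        (gdist G m B₁ B₂) ^ 3 / gvol m ≤ (gdist G s B₁ B₂) ^ 3 / gvol s :=
  stmt11_general G B₁ B₂ h hh a s hs hline hvols hls
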